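/- arXiv:1804.07565 — 4 statements merged into one kernel-verified Lean document; each statement's English description precedes it below -/
import Mathlib

section
/- Let a < b be real numbers, let y : ℝ → ℝ be continuously differentiable on [a,b], and let μ be the occupation measure of y, i.e., the pushforward of the Lebesgue measure restricted to [a,b] under the map x ↦ (x, y(x), y'(x)). Then for every continuously differentiable function φ : ℝ × ℝ → ℝ, ∫ (∂φ/∂x(x,y) + ∂φ/∂y(x,y) · z) dμ(x,y,z) = φ(b, y(b)) − φ(a, y(a)). (This is equation (15a) of Theorem 1 specialized to n = n_y = 1 and Ω = [a,b], where the boundary measure consists of the Dirac masses at (a, y(a), y'(a)) and (b, y(b), y'(b)) with outward normals η(a) = −1 and η(b) = +1.) -/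
/-!
By the change of variables for a pushforward, the left-hand side is
`∫_a^b ∂φ(x, y x)·(1, y' x) dx`. By the chain rule the integrand is the derivative of
`x ↦ φ (x, y x)`, so the fundamental theorem of calculus gives `φ (b, y b) - φ (a, y a)`.
-/

open MeasureTheory Set

theorem ContinuousLinearMap.map_one_prod (L : ℝ × ℝ →L[ℝ] ℝ) (v : ℝ) :
    L (1, v) = L (1, 0) + L (0, 1) * v := by
  have hsplit : ((1 : ℝ), v) = (1, 0) + v • ((0 : ℝ), (1 : ℝ)) := by
    ext <;> simp
  rw [hsplit, map_add, map_smul, smul_eq_mul, mul_comm]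

theorem integral_fderiv_comp_eq_sub {E F : Type*} [NormedAddCommGroup E] [NormedSpace ℝ E]
    [NormedAddCommGroup F] [NormedSpace ℝ F] [CompleteSpace F]
    {f : E → F} (hf : ContDiff ℝ 1 f) {γ γ' : ℝ → E} {a b : ℝ} (hab : a ≤ b)
    (hγ : ∀ x ∈ Icc a b, HasDerivWithinAt γ (γ' x) (Icc a b) x)
    (hγ' : ContinuousOn γ' (Icc a b)) :
    ∫ x in a..b, fderiv ℝ f (γ x) (γ' x) = f (γ b) - f (γ a) := by
  have hγc : ContinuousOn γ (Icc a b) := fun x hx => (hγ x hx).continuousWithinAt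
  apply intervalIntegral.integral_eq_sub_of_hasDeriv_right_of_le hab
  · exact hf.continuous.comp_continuousOn hγc
  · intro x hx
    have hγx : HasDerivAt γ (γ' x) x :=
      (hγ x (Ioo_subset_Icc_self hx)).hasDerivAt (Icc_mem_nhds hx.1 hx.2)
    exact ((hf.differentiable one_ne_zero (γ x)).hasFDerivAt.comp_hasDerivAt x
      hγx).hasDerivWithinAt
  · exact (((hf.continuous_fderiv one_ne_zero).comp_continuousOn hγc).clm_apply
      hγ').intervalIntegrable_of_Icc hab

/-- Equation (15a) of Theorem 1 specialized to `n = n_y = 1`, `Ω = [a,b]`: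
for the occupation measure `μ` of a continuously differentiable function `y` on `[a,b]`
(with derivative `y'`) and any `C¹` test function `φ`,
`∫ (∂φ/∂x + ∂φ/∂y ⬝ z) dμ = φ(b, y b) - φ(a, y a)`. -/
theorem occupation_measure_transport_1d
    (a b : ℝ) (hab : a < b) (y y' : ℝ → ℝ)
    (hy : ∀ x ∈ Icc a b, HasDerivWithinAt y (y' x) (Icc a b) x)
    (hy' : ContinuousOn y' (Icc a b))
    (μ : Measure (ℝ × ℝ × ℝ))
    (hμ : μ = Measure.map (fun x => (x, y x, y' x)) (volume.restrict (Icc a b)))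
    (φ : ℝ × ℝ → ℝ) (hφ : ContDiff ℝ 1 φ) :
    ∫ p : ℝ × ℝ × ℝ,
        (fderiv ℝ φ (p.1, p.2.1) (1, 0) + fderiv ℝ φ (p.1, p.2.1) (0, 1) * p.2.2) ∂μ
      = φ (b, y b) - φ (a, y a) := by
  simp_rw [← ContinuousLinearMap.map_one_prod]
  have hyc : ContinuousOn y (Icc a b) := fun x hx => (hy x hx).continuousWithinAt
  have hlift : AEMeasurable (fun x => (x, y x, y' x)) (volume.restrict (Icc a b)) :=
    (continuousOn_id.prodMk (hyc.prodMk hy')).aemeasurable measurableSet_Icc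
  have hintegrand : Continuous fun p : ℝ × ℝ × ℝ => fderiv ℝ φ (p.1, p.2.1) (1, p.2.2) :=
    ((hφ.continuous_fderiv one_ne_zero).comp (by fun_prop)).clm_apply (by fun_prop)
  rw [hμ, integral_map hlift hintegrand.aestronglyMeasurable, integral_Icc_eq_integral_Ioc,
    ← intervalIntegral.integral_of_le hab.le]
  exact integral_fderiv_comp_eq_sub hφ hab.le
    (fun x hx => (hasDerivWithinAt_id x _).prodMk (hy x hx)) (continuousOn_const.prodMk hy')
end

section
/- Let a < b be real numbers, let y : ℝ → ℝ be twice continuously differentiable on [a,b], let F : ℝ³ → ℝ be continuous, let B : ℝ² → ℝ be continuously differentiable, and suppose F(x, y(x), y'(x)) + B(x, y(x)) y''(x) = 0 for all x ∈ [a,b]. Let μ be the occupation measure of y, i.e., the pushforward of the Lebesgue measure restricted to [a,b] under the map x ↦ (x, y(x), y'(x)). Then for every continuously differentiable φ : ℝ × ℝ → ℝ: ∫ φ(x,y) F(x,y,z) dμ − ∫ φ(x,y) [∂B/∂x(x,y) + ∂B/∂y(x,y) · z] z dμ − ∫ [∂φ/∂x(x,y) + ∂φ/∂y(x,y) · z]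 B(x,y) z dμ + B(b, y(b)) φ(b, y(b)) y'(b) − B(a, y(a)) φ(a, y(a)) y'(a) = 0. (This is equation (15b) of Theorem 1 specialized to n = n_y = 1 and Ω = [a,b], where the boundary measure consists of the Dirac masses at the endpoint graph points with outward normals η(a) = −1 and η(b) = +1.) -/
/-!
Along the solution, the product rule and the ODE `B y'' = -F` give
`(B φ y')' = (∂ₓB + ∂_yB y') φ y' + B (∂ₓφ + ∂_yφ y') y' - φ F`,
so the three integrals against the occupation measure combine, after pulling them back to
`[a, b]`, into the integral of `-(B φ y')'`; the fundamental theorem of calculus leaves only the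
boundary terms.
-/

open MeasureTheory Set

theorem integral_Icc_eq_sub_of_hasDerivWithinAt {E : Type*} [NormedAddCommGroup E]
    [NormedSpace ℝ E] [CompleteSpace E] {f f' : ℝ → E} {a b : ℝ} (hab : a ≤ b)
    (hf : ∀ x ∈ Icc a b, HasDerivWithinAt f (f' x) (Icc a b) x)
    (hf' : ContinuousOn f' (Icc a b)) :
    ∫ x in Icc a b, f' x = f b - f a := by
  rw [integral_Icc_eq_integral_Ioc, ← intervalIntegral.integral_of_le hab]
  refine intervalIntegral.integral_eq_sub_of_hasDerivAt_of_le hab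
    (fun x hx => (hf x hx).continuousWithinAt) (fun x hx => ?_)
    (hf'.intervalIntegrable_of_Icc hab)
  exact (hf x (Ioo_subset_Icc_self hx)).hasDerivAt (Icc_mem_nhds hx.1 hx.2)

theorem DifferentiableAt.hasDerivWithinAt_comp_graph {f : ℝ × ℝ → ℝ} {y : ℝ → ℝ}
    {s : Set ℝ} {x v : ℝ} (hf : DifferentiableAt ℝ f (x, y x)) (hy : HasDerivWithinAt y v s x) :
    HasDerivWithinAt (fun t => f (t, y t))
      (fderiv ℝ f (x, y x) (1, 0) + fderiv ℝ f (x, y x) (0, 1) * v) s x := by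
  refine (hf.hasFDerivAt.comp_hasDerivWithinAt x
    ((hasDerivWithinAt_id x s).prodMk hy)).congr_deriv ?_
  rw [show ((1 : ℝ), v) = (1, 0) + v • (0, 1) by simp, map_add, map_smul, smul_eq_mul, mul_comm]

section Pushforward

variable {α X : Type*} [TopologicalSpace α] [MeasurableSpace α] [OpensMeasurableSpace α]
  [TopologicalSpace X] [MeasurableSpace X] [BorelSpace X] {μ : Measure α} {s : Set α}
  {γ : α → X} {f : X → ℝ}

theorem integral_map_restrict_of_continuousOn (hs : MeasurableSet s) (hγ : ContinuousOn γ s)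
    (hf : Continuous f) : ∫ p, f p ∂(μ.restrict s).map γ = ∫ x in s, f (γ x) ∂μ :=
  integral_map (hγ.aemeasurable hs) hf.aestronglyMeasurable

theorem integrable_map_restrict_of_continuousOn [IsFiniteMeasureOnCompacts μ] (hs : IsCompact s)
    (hs' : MeasurableSet s) (hγ : ContinuousOn γ s) (hf : Continuous f) :
    Integrable f ((μ.restrict s).map γ) :=
  (integrable_map_measure hf.aestronglyMeasurable (hγ.aemeasurable hs')).2
    ((hf.comp_continuousOn hγ).integrableOn_compact' hs hs')

end Pushforward

theorem occupation_measure_second_order_1d_general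
    (a b : ℝ) (hab : a < b) (y y' y'' : ℝ → ℝ)
    (hy : ∀ x ∈ Icc a b, HasDerivWithinAt y (y' x) (Icc a b) x)
    (hy' : ∀ x ∈ Icc a b, HasDerivWithinAt y' (y'' x) (Icc a b) x)
    (F : ℝ × ℝ × ℝ → ℝ) (hF : Continuous F)
    (B : ℝ × ℝ → ℝ) (hB : ContDiff ℝ 1 B)
    (hode : ∀ x ∈ Icc a b, F (x, y x, y' x) + B (x, y x) * y'' x = 0)
    (μ : Measure (ℝ × ℝ × ℝ))
    (hμ : μ = Measure.map (fun x => (x, y x, y' x)) (volume.restrict (Icc a b)))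
    (φ : ℝ × ℝ → ℝ) (hφ : ContDiff ℝ 1 φ) :
    (∫ p : ℝ × ℝ × ℝ, φ (p.1, p.2.1) * F p ∂μ)
      - (∫ p : ℝ × ℝ × ℝ,
          φ (p.1, p.2.1)
            * (fderiv ℝ B (p.1, p.2.1) (1, 0) + fderiv ℝ B (p.1, p.2.1) (0, 1) * p.2.2)
            * p.2.2 ∂μ)
      - (∫ p : ℝ × ℝ × ℝ,
          (fderiv ℝ φ (p.1, p.2.1) (1, 0) + fderiv ℝ φ (p.1, p.2.1) (0, 1) * p.2.2)
            * B (p.1, p.2.1) * p.2.2 ∂μ)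
      + B (b, y b) * φ (b, y b) * y' b - B (a, y a) * φ (a, y a) * y' a = 0 := by
  have hBc := hB.continuous
  have hφc := hφ.continuous
  have hB'c := hB.continuous_fderiv one_ne_zero
  have hφ'c := hφ.continuous_fderiv one_ne_zero
  have hyc := HasDerivWithinAt.continuousOn hy
  have hy'c := HasDerivWithinAt.continuousOn hy'
  have hγ : ContinuousOn (fun x => (x, y x, y' x)) (Icc a b) := by fun_prop
  have hint {f : ℝ × ℝ × ℝ → ℝ} (hf : Continuous f) : Integrable f μ :=
    hμ ▸ integrable_map_restrict_of_continuousOn isCompact_Icc measurableSet_Icc hγ hf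
  rw [← integral_sub (hint (by fun_prop)) (hint (by fun_prop)),
    ← integral_sub (hint (by fun_prop)) (hint (by fun_prop)), hμ,
    integral_map_restrict_of_continuousOn measurableSet_Icc hγ (by fun_prop)]
  have hprim : ∀ x ∈ Icc a b, HasDerivWithinAt (fun t => B (t, y t) * φ (t, y t) * y' t)
      (-(φ (x, y x) * F (x, y x, y' x)
        - φ (x, y x) * (fderiv ℝ B (x, y x) (1, 0) + fderiv ℝ B (x, y x) (0, 1) * y' x) * y' x
        - (fderiv ℝ φ (x, y x) (1, 0) + fderiv ℝ φ (x, y x) (0, 1) * y' x)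
          * B (x, y x) * y' x)) (Icc a b) x := by
    intro x hx
    refine (((hB.differentiable one_ne_zero _).hasDerivWithinAt_comp_graph (hy x hx)).mul
      ((hφ.differentiable one_ne_zero _).hasDerivWithinAt_comp_graph (hy x hx))).mul
      (hy' x hx) |>.congr_deriv ?_
    simp only [Pi.mul_apply]
    linear_combination φ (x, y x) * hode x hx
  have hftc := integral_Icc_eq_sub_of_hasDerivWithinAt hab.le hprim (by fun_prop)
  rw [integral_neg] at hftc
  linarith

/-- Equation (15b) of Theorem 1 specialized to `n = n_y = 1`, `Ω = [a,b]`, for a second-order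
ODE `F(x, y, y') + B(x, y) y'' = 0`: the occupation measure `μ` of `y` satisfies, for every
`C¹` test function `φ`,
`∫ φ F dμ − ∫ φ (∂B/∂x + ∂B/∂y z) z dμ − ∫ (∂φ/∂x + ∂φ/∂y z) B z dμ
  + B(b,y(b)) φ(b,y(b)) y'(b) − B(a,y(a)) φ(a,y(a)) y'(a) = 0`. -/
theorem occupation_measure_second_order_1d
    (a b : ℝ) (hab : a < b) (y y' y'' : ℝ → ℝ)
    (hy : ∀ x ∈ Icc a b, HasDerivWithinAt y (y' x) (Icc a b) x)
    (hy' : ∀ x ∈ Icc a b, HasDerivWithinAt y' (y'' x) (Icc a b) x)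
    (hy'' : ContinuousOn y'' (Icc a b))
    (F : ℝ × ℝ × ℝ → ℝ) (hF : Continuous F)
    (B : ℝ × ℝ → ℝ) (hB : ContDiff ℝ 1 B)
    (hode : ∀ x ∈ Icc a b, F (x, y x, y' x) + B (x, y x) * y'' x = 0)
    (μ : Measure (ℝ × ℝ × ℝ))
    (hμ : μ = Measure.map (fun x => (x, y x, y' x)) (volume.restrict (Icc a b)))
    (φ : ℝ × ℝ → ℝ) (hφ : ContDiff ℝ 1 φ) :
    (∫ p : ℝ × ℝ × ℝ, φ (p.1, p.2.1) * F p ∂μ)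
      - (∫ p : ℝ × ℝ × ℝ,
          φ (p.1, p.2.1)
            * (fderiv ℝ B (p.1, p.2.1) (1, 0) + fderiv ℝ B (p.1, p.2.1) (0, 1) * p.2.2)
            * p.2.2 ∂μ)
      - (∫ p : ℝ × ℝ × ℝ,
          (fderiv ℝ φ (p.1, p.2.1) (1, 0) + fderiv ℝ φ (p.1, p.2.1) (0, 1) * p.2.2)
            * B (p.1, p.2.1) * p.2.2 ∂μ)
      + B (b, y b) * φ (b, y b) * y' b - B (a, y a) * φ (a, y a) * y' a = 0 :=
  occupation_measure_second_order_1d_general a b hab y y' y'' hy hy' F hF B hB hode μ hμ φ hφ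
end

section
/- Let a < b be real numbers and let F, G, L, L∂ : ℝ³ → ℝ be continuous. Call a pair (μ, μ∂) of compactly supported finite nonnegative Borel measures on [a,b] × ℝ × ℝ and {a,b} × ℝ × ℝ feasible if: (i) for every smooth φ : ℝ² → ℝ, ∫ (∂φ/∂x(x,y) + ∂φ/∂y(x,y) z) dμ(x,y,z) = ∫ φ(x,y) η(x) dμ∂(x,y,z), where η(a) = −1 and η(b) = +1; (ii) for every smooth φ : ℝ² → ℝ, ∫ φ(x,y) F(x,y,z) dμ(x,y,z) = 0; (iii) for every smooth φ : ℝ² → ℝ, ∫ φ(x,y) G(x,y,z) dμ∂(x,y,z) = 0; (iv) the x-marginal of μ∂ equals δ_a + δ_b. Then for every y : ℝ → ℝ continuously differentiable on [a,b] with F(x, y(x), y'(x)) = 0 for all x ∈ [a,b] and G(c, y(c), y'(c)) = 0 for c ∈ {a,b}, and for every real number c: if c ≤ ∫ L dμ + ∫ L∂ dμ∂ for every feasible pair (μ, μ∂), then c ≤ ∫_a^b L(x, y(x), y'(x)) dx + L∂(a, y(a), y'(a)) + L∂(b, y(b), y'(b)); and if c ≥ ∫ L dμ + ∫ L∂ dμ∂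 for every feasible pair, then c ≥ ∫_a^b L(x, y(x), y'(x)) dx + L∂(a, y(a), y'(a)) + L∂(b, y(b), y'(b)). (This is Theorem 2: the optimal value of the infinite-dimensional linear program lower/upper bounds the functional J evaluated along any solution of the differential equation, specialized to n = n_y = 1 and Ω = [a,b].) -/
/-!
The occupation measure `μ` of a solution `y` on `[a, b]`, together with its boundary measure
`μ∂ = δ_(a, y a, y' a) + δ_(b, y b, y' b)`, is a feasible pair: the Stokes constraint is the
fundamental theorem of calculus for `x ↦ φ (x, y x)`, and the ODE and boundary constraints hold
because both measures live on the graph `(x, y x, y' x)`. The objective at this pair is exactly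
`J(y)`, so any bound valid for all feasible pairs bounds `J(y)`.
-/

open MeasureTheory Set

/-- A pair `(μ, μ∂)` of compactly supported finite nonnegative Borel measures on
`[a,b] × ℝ × ℝ` and `{a,b} × ℝ × ℝ` is feasible for the infinite-dimensional LP associated to
the ODE `F(x, y, y') = 0` with boundary condition `G = 0`, where the outward normal is
`η(a) = -1`, `η(b) = +1`. -/
def FeasiblePair (a b : ℝ) (F G : ℝ × ℝ × ℝ → ℝ) (μ μb : Measure (ℝ × ℝ × ℝ)) : Prop :=
  IsFiniteMeasure μ ∧ IsFiniteMeasure μb ∧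
  (∃ K : Set (ℝ × ℝ × ℝ), IsCompact K ∧ μ Kᶜ = 0) ∧
  (∃ K : Set (ℝ × ℝ × ℝ), IsCompact K ∧ μb Kᶜ = 0) ∧
  μ ((Icc a b ×ˢ (univ : Set ℝ) ×ˢ (univ : Set ℝ))ᶜ) = 0 ∧
  μb ((({a, b} : Set ℝ) ×ˢ (univ : Set ℝ) ×ˢ (univ : Set ℝ))ᶜ) = 0 ∧
  (∀ φ : ℝ × ℝ → ℝ, ContDiff ℝ (⊤ : ℕ∞) φ →
    ∫ p : ℝ × ℝ × ℝ,
        (fderiv ℝ φ (p.1, p.2.1) (1, 0) + fderiv ℝ φ (p.1, p.2.1) (0, 1) * p.2.2) ∂μ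
      = ∫ p : ℝ × ℝ × ℝ, φ (p.1, p.2.1) * (if p.1 = a then (-1 : ℝ) else 1) ∂μb) ∧
  (∀ φ : ℝ × ℝ → ℝ, ContDiff ℝ (⊤ : ℕ∞) φ →
    ∫ p : ℝ × ℝ × ℝ, φ (p.1, p.2.1) * F p ∂μ = 0) ∧
  (∀ φ : ℝ × ℝ → ℝ, ContDiff ℝ (⊤ : ℕ∞) φ →
    ∫ p : ℝ × ℝ × ℝ, φ (p.1, p.2.1) * G p ∂μb = 0) ∧
  Measure.map (fun p : ℝ × ℝ × ℝ => p.1) μb = Measure.dirac a + Measure.dirac b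

noncomputable def occupationMeasure (a b : ℝ) (y y' : ℝ → ℝ) : Measure (ℝ × ℝ × ℝ) :=
  (volume.restrict (Icc a b)).map fun x => (x, y x, y' x)

noncomputable def boundaryMeasure (a b : ℝ) (y y' : ℝ → ℝ) : Measure (ℝ × ℝ × ℝ) :=
  Measure.dirac (a, y a, y' a) + Measure.dirac (b, y b, y' b)

section DiracPair

variable {α : Type*} [MeasurableSpace α] [MeasurableSingletonClass α]

theorem ae_dirac_add_dirac_iff {p : α → Prop} {x z : α} :
    (∀ᵐ w ∂(Measure.dirac x + Measure.dirac z), p w) ↔ p x ∧ p z := by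
  simp only [ae_add_measure_iff, ae_dirac_eq, Filter.eventually_pure]

theorem integral_dirac_add_dirac {E : Type*} [NormedAddCommGroup E] [NormedSpace ℝ E]
    [CompleteSpace E] (f : α → E) (x z : α) :
    ∫ w, f w ∂(Measure.dirac x + Measure.dirac z) = f x + f z := by
  rw [integral_add_measure (integrable_dirac enorm_lt_top) (integrable_dirac enorm_lt_top),
    integral_dirac, integral_dirac]

end DiracPair

theorem ae_map_restrict_mem_image {α β : Type*} [TopologicalSpace α] [T2Space α]
    [MeasurableSpace α] [OpensMeasurableSpace α] [TopologicalSpace β] [T2Space β]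
    [MeasurableSpace β] [BorelSpace β] {μ : Measure α} {s : Set α} (hs : IsCompact s)
    {f : α → β} (hf : ContinuousOn f s) :
    ∀ᵐ p ∂(μ.restrict s).map f, p ∈ f '' s := by
  refine (ae_map_iff (hf.aemeasurable hs.isClosed.measurableSet)
    (hs.image_of_continuousOn hf).isClosed.measurableSet).2 ?_
  filter_upwards [ae_restrict_mem hs.isClosed.measurableSet] with x hx
  exact mem_image_of_mem f hx

theorem ContinuousLinearMap.apply_one_zero_add_apply_zero_one_mul (ℓ : ℝ × ℝ →L[ℝ] ℝ) (t : ℝ) :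
    ℓ (1, 0) + ℓ (0, 1) * t = ℓ (1, t) := by
  rw [show ((1 : ℝ), t) = ((1 : ℝ), (0 : ℝ)) + t • ((0 : ℝ), (1 : ℝ)) by simp, map_add,
    map_smul, smul_eq_mul, mul_comm]

section Graph

variable {a b : ℝ} {y y' : ℝ → ℝ}

theorem integral_Icc_fderiv_comp_graph {φ : ℝ × ℝ → ℝ} (hφ : ContDiff ℝ 1 φ) (hab : a ≤ b)
    (hy : ∀ x ∈ Icc a b, HasDerivWithinAt y (y' x) (Icc a b) x)
    (hy' : ContinuousOn y' (Icc a b)) :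
    ∫ x in Icc a b, fderiv ℝ φ (x, y x) (1, y' x) = φ (b, y b) - φ (a, y a) := by
  have hyc : ContinuousOn y (Icc a b) := fun x hx => (hy x hx).continuousWithinAt
  have hgraph : ContinuousOn (fun x => (x, y x)) (Icc a b) := continuousOn_id.prodMk hyc
  have hderiv : ∀ x ∈ Ioo a b,
      HasDerivAt (fun x => φ (x, y x)) (fderiv ℝ φ (x, y x) (1, y' x)) x := by
    intro x hx
    have hyx : HasDerivAt y (y' x) x := (hy x (Ioo_subset_Icc_self hx)).hasDerivAt
      (Icc_mem_nhds hx.1 hx.2)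
    exact (hφ.differentiable one_ne_zero (x, y x)).hasFDerivAt.comp_hasDerivAt x
      ((hasDerivAt_id x).prodMk hyx)
  have hcont : ContinuousOn (fun x => fderiv ℝ φ (x, y x) (1, y' x)) (Icc a b) :=
    ((hφ.continuous_fderiv one_ne_zero).comp_continuousOn hgraph).clm_apply
      (continuousOn_const.prodMk hy')
  rw [integral_Icc_eq_integral_Ioc, ← intervalIntegral.integral_of_le hab]
  exact intervalIntegral.integral_eq_sub_of_hasDerivAt_of_le hab
    (hφ.continuous.comp_continuousOn hgraph) hderiv
    ((intervalIntegrable_iff_integrableOn_Icc_of_le hab).2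
      (hcont.integrableOn_compact isCompact_Icc))

variable (hy : ContinuousOn y (Icc a b)) (hy' : ContinuousOn y' (Icc a b))
include hy hy'

theorem continuousOn_graph : ContinuousOn (fun x => (x, y x, y' x)) (Icc a b) :=
  continuousOn_id.prodMk (hy.prodMk hy')

theorem ae_occupationMeasure :
    ∀ᵐ p ∂occupationMeasure a b y y', p ∈ (fun x => (x, y x, y' x)) '' Icc a b :=
  ae_map_restrict_mem_image isCompact_Icc (continuousOn_graph hy hy')

theorem integral_occupationMeasure {f : ℝ × ℝ × ℝ → ℝ} (hf : Continuous f) :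
    ∫ p, f p ∂occupationMeasure a b y y' = ∫ x in Icc a b, f (x, y x, y' x) :=
  integral_map ((continuousOn_graph hy hy').aemeasurable measurableSet_Icc)
    hf.aestronglyMeasurable

end Graph

theorem isFiniteMeasure_occupationMeasure (a b : ℝ) (y y' : ℝ → ℝ) :
    IsFiniteMeasure (occupationMeasure a b y y') := by
  unfold occupationMeasure
  infer_instance

section Boundary

variable (a b : ℝ) (y y' : ℝ → ℝ)

theorem ae_boundaryMeasure_iff {p : ℝ × ℝ × ℝ → Prop} :
    (∀ᵐ q ∂boundaryMeasure a b y y', p q) ↔ p (a, y a, y' a) ∧ p (b, y b, y' b) :=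
  ae_dirac_add_dirac_iff

theorem integral_boundaryMeasure (f : ℝ × ℝ × ℝ → ℝ) :
    ∫ q, f q ∂boundaryMeasure a b y y' = f (a, y a, y' a) + f (b, y b, y' b) :=
  integral_dirac_add_dirac f _ _

theorem map_fst_boundaryMeasure :
    (boundaryMeasure a b y y').map Prod.fst = Measure.dirac a + Measure.dirac b := by
  rw [boundaryMeasure, Measure.map_add _ _ measurable_fst, Measure.map_dirac' measurable_fst,
    Measure.map_dirac' measurable_fst]

end Boundary

theorem integral_fderiv_occupationMeasure {a b : ℝ} (hab : a < b) {y y' : ℝ → ℝ}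
    (hy : ∀ x ∈ Icc a b, HasDerivWithinAt y (y' x) (Icc a b) x)
    (hy' : ContinuousOn y' (Icc a b)) {φ : ℝ × ℝ → ℝ} (hφ : ContDiff ℝ 1 φ) :
    ∫ p, (fderiv ℝ φ (p.1, p.2.1) (1, 0) + fderiv ℝ φ (p.1, p.2.1) (0, 1) * p.2.2)
        ∂occupationMeasure a b y y'
      = ∫ p, φ (p.1, p.2.1) * (if p.1 = a then (-1 : ℝ) else 1) ∂boundaryMeasure a b y y' := by
  have hfd : Continuous (fderiv ℝ φ) := hφ.continuous_fderiv one_ne_zero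
  simp_rw [ContinuousLinearMap.apply_one_zero_add_apply_zero_one_mul]
  rw [integral_occupationMeasure (fun x hx => (hy x hx).continuousWithinAt) hy' (by fun_prop),
    integral_Icc_fderiv_comp_graph hφ hab.le hy hy', integral_boundaryMeasure, if_pos rfl,
    if_neg hab.ne']
  ring

theorem feasiblePair_occupationMeasure_boundaryMeasure {a b : ℝ} (hab : a < b)
    {F G : ℝ × ℝ × ℝ → ℝ} {y y' : ℝ → ℝ}
    (hy : ∀ x ∈ Icc a b, HasDerivWithinAt y (y' x) (Icc a b) x)
    (hy' : ContinuousOn y' (Icc a b))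
    (hode : ∀ x ∈ Icc a b, F (x, y x, y' x) = 0)
    (hbnd : ∀ c ∈ ({a, b} : Set ℝ), G (c, y c, y' c) = 0) :
    FeasiblePair a b F G (occupationMeasure a b y y') (boundaryMeasure a b y y') := by
  have hyc : ContinuousOn y (Icc a b) := fun x hx => (hy x hx).continuousWithinAt
  have hμ := ae_occupationMeasure hyc hy'
  have hμ_Icc : ∀ᵐ q ∂occupationMeasure a b y y', q ∈ Icc a b ×ˢ univ ×ˢ univ := by
    filter_upwards [hμ] with _ ⟨x, hx, hq⟩
    exact hq ▸ ⟨hx, mem_univ _, mem_univ _⟩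
  have hμb_pts :
      ∀ᵐ q ∂boundaryMeasure a b y y', q ∈ ({(a, y a, y' a), (b, y b, y' b)} : Set _) :=
    (ae_boundaryMeasure_iff a b y y').2 ⟨by simp, by simp⟩
  have hμb_ends : ∀ᵐ q ∂boundaryMeasure a b y y', q ∈ ({a, b} : Set ℝ) ×ˢ univ ×ˢ univ :=
    (ae_boundaryMeasure_iff a b y y').2 ⟨by simp, by simp⟩
  refine ⟨isFiniteMeasure_occupationMeasure a b y y', ?_,
    ⟨_, isCompact_Icc.image_of_continuousOn (continuousOn_graph hyc hy'), mem_ae_iff.1 hμ⟩,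
    ⟨{(a, y a, y' a), (b, y b, y' b)}, (toFinite _).isCompact, mem_ae_iff.1 hμb_pts⟩,
    mem_ae_iff.1 hμ_Icc, mem_ae_iff.1 hμb_ends, ?_, ?_, ?_, map_fst_boundaryMeasure a b y y'⟩
  · unfold boundaryMeasure
    infer_instance
  · exact fun φ hφ => integral_fderiv_occupationMeasure hab hy hy' (hφ.of_le (by simp))
  · intro φ _
    refine integral_eq_zero_of_ae ?_
    filter_upwards [hμ] with _ ⟨x, hx, hq⟩
    simp [← hq, hode x hx]
  · intro φ _
    simp [integral_boundaryMeasure, hbnd]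

theorem integral_occupationMeasure_add_integral_boundaryMeasure {a b : ℝ} {y y' : ℝ → ℝ}
    (hy : ContinuousOn y (Icc a b)) (hy' : ContinuousOn y' (Icc a b))
    {L : ℝ × ℝ × ℝ → ℝ} (hL : Continuous L) (Lb : ℝ × ℝ × ℝ → ℝ) :
    (∫ p, L p ∂occupationMeasure a b y y') + ∫ p, Lb p ∂boundaryMeasure a b y y'
      = (∫ x in Icc a b, L (x, y x, y' x)) + Lb (a, y a, y' a) + Lb (b, y b, y' b) := by
  rw [integral_occupationMeasure hy hy' hL, integral_boundaryMeasure, add_assoc]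

theorem lp_bounds_functional_general
    (a b : ℝ) (hab : a < b) (F G L Lb : ℝ × ℝ × ℝ → ℝ)
    (hL : Continuous L)
    (y y' : ℝ → ℝ)
    (hy : ∀ x ∈ Icc a b, HasDerivWithinAt y (y' x) (Icc a b) x)
    (hy' : ContinuousOn y' (Icc a b))
    (hode : ∀ x ∈ Icc a b, F (x, y x, y' x) = 0)
    (hbnd : ∀ c ∈ ({a, b} : Set ℝ), G (c, y c, y' c) = 0)
    (c : ℝ) :
    ((∀ μ μb : Measure (ℝ × ℝ × ℝ), FeasiblePair a b F G μ μb →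
        c ≤ (∫ p, L p ∂μ) + ∫ p, Lb p ∂μb) →
      c ≤ (∫ x in Icc a b, L (x, y x, y' x)) + Lb (a, y a, y' a) + Lb (b, y b, y' b)) ∧
    ((∀ μ μb : Measure (ℝ × ℝ × ℝ), FeasiblePair a b F G μ μb →
        (∫ p, L p ∂μ) + (∫ p, Lb p ∂μb) ≤ c) →
      (∫ x in Icc a b, L (x, y x, y' x)) + Lb (a, y a, y' a) + Lb (b, y b, y' b) ≤ c) := by
  have hfeas := feasiblePair_occupationMeasure_boundaryMeasure hab hy hy' hode hbnd
  rw [← integral_occupationMeasure_add_integral_boundaryMeasure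
    (fun x hx => (hy x hx).continuousWithinAt) hy' hL Lb]
  exact ⟨fun h => h _ _ hfeas, fun h => h _ _ hfeas⟩

/-- Theorem 2 specialized to `n = n_y = 1`, `Ω = [a,b]`: any bound on the LP objective valid for
all feasible measure pairs is also a bound on the functional `J` evaluated along any solution
`y` of the ODE `F(x, y, y') = 0`, `G = 0` on the boundary. -/
theorem lp_bounds_functional
    (a b : ℝ) (hab : a < b) (F G L Lb : ℝ × ℝ × ℝ → ℝ)
    (hF : Continuous F) (hG : Continuous G) (hL : Continuous L) (hLb : Continuous Lb)
    (y y' : ℝ → ℝ)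
    (hy : ∀ x ∈ Icc a b, HasDerivWithinAt y (y' x) (Icc a b) x)
    (hy' : ContinuousOn y' (Icc a b))
    (hode : ∀ x ∈ Icc a b, F (x, y x, y' x) = 0)
    (hbnd : ∀ c ∈ ({a, b} : Set ℝ), G (c, y c, y' c) = 0)
    (c : ℝ) :
    ((∀ μ μb : Measure (ℝ × ℝ × ℝ), FeasiblePair a b F G μ μb →
        c ≤ (∫ p, L p ∂μ) + ∫ p, Lb p ∂μb) →
      c ≤ (∫ x in Icc a b, L (x, y x, y' x)) + Lb (a, y a, y' a) + Lb (b, y b, y' b)) ∧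
    ((∀ μ μb : Measure (ℝ × ℝ × ℝ), FeasiblePair a b F G μ μb →
        (∫ p, L p ∂μ) + (∫ p, Lb p ∂μb) ≤ c) →
      (∫ x in Icc a b, L (x, y x, y' x)) + Lb (a, y a, y' a) + Lb (b, y b, y' b) ≤ c) :=
  lp_bounds_functional_general a b hab F G L Lb hL y y' hy hy' hode hbnd c
end

section
/- Let n, d be natural numbers with d ≥ 1, let N > 0 be a real number, and let L be a real linear functional on the space of real polynomials in n variables. Suppose that L(p²) ≥ 0 for every polynomial p of total degree at most d, and L((N² − Σ_{j=1}^n xⱼ²)·p²) ≥ 0 for every polynomial p of total degree at most d − 1. Then for every i ∈ {1,…,n} and every natural number k ≤ d: 0 ≤ L(x_i^{2k}) ≤ N^{2k} · L(1). (This is the boundedness-of-moment-sequences step in the proof of Theorem 3: feasibility of the moment and localizing matrix constraints with the Archimedean ball constraint N² − xᵀx ≥ 0 forces all even pseudo-moments to be bounded in terms of the mass L(1).) -/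
open MvPolynomial

/-!
Write `g = N² − Σⱼ xⱼ²`. Since `g·q² = N² q² − Σⱼ (xⱼ q)²` and every `L((xⱼ q)²)` is nonnegative,
the localizing condition gives `L((xᵢ q)²) ≤ N² L(q²)`. Taking `q = xᵢᵏ` yields
`L(xᵢ^(2k+2)) ≤ N² L(xᵢ^(2k))`, and induction on `k` gives the bound.
-/

section

variable {σ R : Type*} [Fintype σ] [CommRing R]

theorem C_sq_sub_sum_X_sq_mul_sq (N : R) (q : MvPolynomial σ R) :
    (C (N ^ 2) - ∑ j, X j ^ 2) * q ^ 2 = N ^ 2 • q ^ 2 - ∑ j, (X j * q) ^ 2 := by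
  simp only [smul_eq_C_mul, sub_mul, Finset.sum_mul, mul_pow]

variable [LinearOrder R] [IsStrictOrderedRing R]

theorem apply_X_mul_sq_le (L : MvPolynomial σ R →ₗ[R] R) (N : R) (q : MvPolynomial σ R)
    (hloc : 0 ≤ L ((C (N ^ 2) - ∑ j, X j ^ 2) * q ^ 2)) (hsq : ∀ j, 0 ≤ L ((X j * q) ^ 2))
    (i : σ) : L ((X i * q) ^ 2) ≤ N ^ 2 * L (q ^ 2) := by
  rw [C_sq_sub_sum_X_sq_mul_sq, map_sub, map_smul, map_sum, sub_nonneg, smul_eq_mul] at hloc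
  exact (Finset.single_le_sum (fun j _ => hsq j) (Finset.mem_univ i)).trans hloc

theorem apply_X_pow_two_mul_le (L : MvPolynomial σ R →ₗ[R] R) (N : R) (d : ℕ)
    (hpsd : ∀ p : MvPolynomial σ R, p.totalDegree ≤ d → 0 ≤ L (p ^ 2))
    (hloc : ∀ p : MvPolynomial σ R, p.totalDegree ≤ d - 1 →
      0 ≤ L ((C (N ^ 2) - ∑ j, X j ^ 2) * p ^ 2))
    (i : σ) {k : ℕ} (hk : k ≤ d) : L (X i ^ (2 * k)) ≤ N ^ (2 * k) * L 1 := by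
  induction k with
  | zero => simp
  | succ k ih =>
    have hsq (j : σ) : 0 ≤ L ((X j * X i ^ k) ^ 2) := by
      refine hpsd _ ((totalDegree_mul _ _).trans ?_)
      rw [totalDegree_X, totalDegree_X_pow]
      omega
    have hstep := apply_X_mul_sq_le L N (X i ^ k)
      (hloc _ (by rw [totalDegree_X_pow]; omega)) hsq i
    rw [← pow_succ', ← pow_mul', ← pow_mul'] at hstep
    calc L (X i ^ (2 * (k + 1))) ≤ N ^ 2 * L (X i ^ (2 * k)) := hstep
      _ ≤ N ^ 2 * (N ^ (2 * k) * L 1) := mul_le_mul_of_nonneg_left (ih (by omega)) (sq_nonneg N)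
      _ = N ^ (2 * (k + 1)) * L 1 := by ring

end

theorem pseudo_moments_bounded_general
    (n d : ℕ) (N : ℝ)
    (L : MvPolynomial (Fin n) ℝ →ₗ[ℝ] ℝ)
    (hpsd : ∀ p : MvPolynomial (Fin n) ℝ, p.totalDegree ≤ d → 0 ≤ L (p ^ 2))
    (hloc : ∀ p : MvPolynomial (Fin n) ℝ, p.totalDegree ≤ d - 1 →
      0 ≤ L ((C (N ^ 2) - ∑ j : Fin n, X j ^ 2) * p ^ 2)) :
    ∀ i : Fin n, ∀ k : ℕ, k ≤ d →
      0 ≤ L (X i ^ (2 * k)) ∧ L (X i ^ (2 * k)) ≤ N ^ (2 * k) * L 1 := by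
  intro i k hk
  refine ⟨?_, apply_X_pow_two_mul_le L N d hpsd hloc i hk⟩
  rw [pow_mul']
  exact hpsd _ (by rwa [totalDegree_X_pow])

/-- Boundedness of pseudo-moment sequences (the key step in the proof of Theorem 3): if a
linear functional `L` on real polynomials in `n` variables is nonnegative on squares of
polynomials of degree at most `d` and on `(N² − Σ xⱼ²)` times squares of polynomials of degree
at most `d − 1`, then all even pseudo-moments `L(xᵢ^(2k))`, `k ≤ d`, satisfy
`0 ≤ L(xᵢ^(2k)) ≤ N^(2k) L(1)`. -/
theorem pseudo_moments_bounded
    (n d : ℕ) (hd : 1 ≤ d) (N : ℝ) (hN : 0 < N)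
    (L : MvPolynomial (Fin n) ℝ →ₗ[ℝ] ℝ)
    (hpsd : ∀ p : MvPolynomial (Fin n) ℝ, p.totalDegree ≤ d → 0 ≤ L (p ^ 2))
    (hloc : ∀ p : MvPolynomial (Fin n) ℝ, p.totalDegree ≤ d - 1 →
      0 ≤ L ((C (N ^ 2) - ∑ j : Fin n, X j ^ 2) * p ^ 2)) :
    ∀ i : Fin n, ∀ k : ℕ, k ≤ d →
      0 ≤ L (X i ^ (2 * k)) ∧ L (X i ^ (2 * k)) ≤ N ^ (2 * k) * L 1 :=
  pseudo_moments_bounded_general n d N L hpsd hloc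
end
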